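/- Let A ∈ ℝ^{n×n} have spectral radius strictly less than 1, let B ∈ ℝ^{n×k}, and let d : ℤ → ℝᵏ be in ℓ2. Then for every t ∈ ℤ the series x_t := ∑_{j=0}^{∞} A^j B d_{t−1−j} converges absolutely, the resulting sequence x : ℤ → ℝⁿ is in ℓ2 and satisfies x_{t+1} = A x_t + B d_t for all t ∈ ℤ, and there is a constant γ ≥ 0, independent of d, such that ‖x‖₂ ≤ γ ‖d‖₂. -/

import Mathlib

/-! By Gelfand's formula, `ρ(A) < 1` makes `j ↦ ‖A^j‖` summable for the L2 operator norm of the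
complexification, so `a_j = ‖A^j‖ ‖B‖` is an ℓ1 kernel with `‖A^j B v‖ ≤ a_j ‖v‖`. Hence
`‖x_t‖ ≤ ∑_j a_j ‖d_{t-1-j}‖`, and Young's inequality ℓ1 ∗ ℓ2 → ℓ2 (weighted Cauchy–Schwarz
`(∑ a_j b_j)² ≤ (∑ a_j)(∑ a_j b_j²)` followed by Fubini) gives `‖x‖₂ ≤ (∑ a_j) ‖d‖₂`. The recursion
comes from splitting off the `j = 0` term of the series. -/

open Matrix

/-- A two-sided sequence `x : ℤ → ℝ^p` is in ℓ2 if the family of squared Euclidean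
norms `t ↦ ‖x_t‖² = x_t ⬝ᵥ x_t` is summable over ℤ. -/
def MemL2 {p : ℕ} (x : ℤ → Fin p → ℝ) : Prop :=
  Summable fun t : ℤ => x t ⬝ᵥ x t

/-- Euclidean norm of a vector in `ℝ^p`. -/
noncomputable def eNorm {p : ℕ} (x : Fin p → ℝ) : ℝ :=
  Real.sqrt (x ⬝ᵥ x)

/-- The ℓ2 norm of a two-sided sequence. -/
noncomputable def l2Norm {p : ℕ} (x : ℤ → Fin p → ℝ) : ℝ :=
  Real.sqrt (∑' t : ℤ, x t ⬝ᵥ x t)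

open Filter in
theorem summable_norm_pow_of_spectralRadius_lt_one {𝔸 : Type*} [NormedRing 𝔸]
    [NormedAlgebra ℂ 𝔸] [CompleteSpace 𝔸] {a : 𝔸} (ha : spectralRadius ℂ a < 1) :
    Summable fun j : ℕ => ‖a ^ j‖ := by
  obtain ⟨r, hρr, hr1⟩ := ENNReal.lt_iff_exists_nnreal_btwn.mp ha
  refine (summable_geometric_of_lt_one r.2 (mod_cast hr1)).of_norm_bounded_eventually_nat ?_
  have hgelfand := spectrum.pow_nnnorm_pow_one_div_tendsto_nhds_spectralRadius a
  filter_upwards [hgelfand.eventually_lt_const hρr, eventually_ne_atTop 0] with j hj hj0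
  rw [← ENNReal.coe_rpow_of_nonneg _ (by positivity), ENNReal.coe_lt_coe, one_div,
    NNReal.rpow_inv_lt_iff (Nat.cast_pos.mpr (Nat.pos_of_ne_zero hj0))] at hj
  rw [norm_norm]
  exact_mod_cast hj.le

section WeightedSums

variable {ι : Type*} {a b : ι → ℝ}

lemma summable_mul_of_summable_mul_sq (ha0 : ∀ i, 0 ≤ a i) (ha : Summable a)
    (hab : Summable fun i => a i * b i ^ 2) : Summable fun i => a i * b i := by
  refine Summable.of_norm_bounded ((ha.add hab).div_const 2) fun i => ?_
  have hb : |b i| ≤ (1 + b i ^ 2) / 2 := by nlinarith [sq_nonneg (|b i| - 1), sq_abs (b i)]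
  calc ‖a i * b i‖ = a i * |b i| := by rw [norm_mul, Real.norm_of_nonneg (ha0 i), Real.norm_eq_abs]
    _ ≤ a i * ((1 + b i ^ 2) / 2) := mul_le_mul_of_nonneg_left hb (ha0 i)
    _ = (a i + a i * b i ^ 2) / 2 := by ring

lemma sq_tsum_mul_le (ha0 : ∀ i, 0 ≤ a i) (hb0 : ∀ i, 0 ≤ b i) (ha : Summable a)
    (hab : Summable fun i => a i * b i ^ 2) :
    (∑' i, a i * b i) ^ 2 ≤ (∑' i, a i) * ∑' i, a i * b i ^ 2 := by
  have hbound : ∀ s : Finset ι, ∑ i ∈ s, a i * b i ≤ √((∑' i, a i) * ∑' i, a i * b i ^ 2) := by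
    intro s
    refine (le_abs_self _).trans (Real.abs_le_sqrt ?_)
    calc (∑ i ∈ s, a i * b i) ^ 2 ≤ (∑ i ∈ s, a i) * ∑ i ∈ s, a i * b i ^ 2 :=
          Finset.sum_sq_le_sum_mul_sum_of_sq_le_mul s (fun i _ => ha0 i)
            (fun i _ => mul_nonneg (ha0 i) (sq_nonneg _)) fun i _ => le_of_eq (by ring)
      _ ≤ (∑' i, a i) * ∑' i, a i * b i ^ 2 :=
          mul_le_mul (ha.sum_le_tsum s fun i _ => ha0 i)
            (hab.sum_le_tsum s fun i _ => mul_nonneg (ha0 i) (sq_nonneg _))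
            (Finset.sum_nonneg fun i _ => mul_nonneg (ha0 i) (sq_nonneg _))
            (tsum_nonneg ha0)
  have hsum := (summable_mul_of_summable_mul_sq ha0 ha hab).tsum_le_of_sum_le hbound
  calc (∑' i, a i * b i) ^ 2 ≤ √((∑' i, a i) * ∑' i, a i * b i ^ 2) ^ 2 :=
        pow_le_pow_left₀ (tsum_nonneg fun i => mul_nonneg (ha0 i) (hb0 i)) hsum 2
    _ = _ := Real.sq_sqrt (mul_nonneg (tsum_nonneg ha0)
        (tsum_nonneg fun i => mul_nonneg (ha0 i) (sq_nonneg _)))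

end WeightedSums

noncomputable def causalConv (a : ℕ → ℝ) (e : ℤ → ℝ) (t : ℤ) : ℝ :=
  ∑' j : ℕ, a j * e (t - j)

section CausalConvolution

variable {a : ℕ → ℝ} {c e : ℤ → ℝ}

lemma hasSum_tsum_mul_sub (ha0 : ∀ j, 0 ≤ a j) (hc0 : ∀ s, 0 ≤ c s) (ha : Summable a)
    (hc : Summable c) :
    HasSum (fun t : ℤ => ∑' j : ℕ, a j * c (t - j)) ((∑' j, a j) * ∑' s, c s) := by
  let φ : ℤ × ℕ ≃ ℤ × ℕ :=
    { toFun := fun p => (p.1 + p.2, p.2)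
      invFun := fun p => (p.1 - p.2, p.2)
      left_inv := fun p => by simp
      right_inv := fun p => by simp }
  have hprod : HasSum (fun p : ℤ × ℕ => c p.1 * a p.2) ((∑' s, c s) * ∑' j, a j) :=
    hc.hasSum.mul ha.hasSum (hc.mul_of_nonneg ha hc0 ha0)
  have hG : HasSum (fun p : ℤ × ℕ => a p.2 * c (p.1 - p.2)) ((∑' j, a j) * ∑' s, c s) := by
    rw [← φ.hasSum_iff, mul_comm]
    convert hprod using 2 with p
    simp [φ, mul_comm]
  exact hG.prod_fiberwise fun t => (hG.summable.prod_factor t).hasSum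

lemma summable_mul_sub_sq (ha0 : ∀ j, 0 ≤ a j) (ha : Summable a)
    (he : Summable fun s => e s ^ 2) (t : ℤ) : Summable fun j : ℕ => a j * e (t - j) ^ 2 :=
  (ha.mul_right (∑' s, e s ^ 2)).of_nonneg_of_le (fun j => mul_nonneg (ha0 j) (sq_nonneg _))
    fun j => mul_le_mul_of_nonneg_left (he.le_tsum _ fun s _ => sq_nonneg (e s)) (ha0 j)

lemma summable_mul_sub (ha0 : ∀ j, 0 ≤ a j) (ha : Summable a)
    (he : Summable fun s => e s ^ 2) (t : ℤ) : Summable fun j : ℕ => a j * e (t - j) :=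
  summable_mul_of_summable_mul_sq ha0 ha (summable_mul_sub_sq ha0 ha he t)

lemma sq_causalConv_le (ha0 : ∀ j, 0 ≤ a j) (he0 : ∀ s, 0 ≤ e s) (ha : Summable a)
    (he : Summable fun s => e s ^ 2) (t : ℤ) :
    causalConv a e t ^ 2 ≤ (∑' j, a j) * ∑' j : ℕ, a j * e (t - j) ^ 2 :=
  sq_tsum_mul_le ha0 (fun _ => he0 _) ha (summable_mul_sub_sq ha0 ha he t)

lemma summable_sq_causalConv (ha0 : ∀ j, 0 ≤ a j) (he0 : ∀ s, 0 ≤ e s) (ha : Summable a)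
    (he : Summable fun s => e s ^ 2) : Summable fun t => causalConv a e t ^ 2 :=
  ((hasSum_tsum_mul_sub ha0 (fun s => sq_nonneg (e s)) ha he).summable.mul_left _).of_nonneg_of_le
    (fun _ => sq_nonneg _) (sq_causalConv_le ha0 he0 ha he)

lemma tsum_sq_causalConv_le (ha0 : ∀ j, 0 ≤ a j) (he0 : ∀ s, 0 ≤ e s) (ha : Summable a)
    (he : Summable fun s => e s ^ 2) :
    ∑' t, causalConv a e t ^ 2 ≤ (∑' j, a j) ^ 2 * ∑' s, e s ^ 2 := by
  have hfib := hasSum_tsum_mul_sub ha0 (fun s => sq_nonneg (e s)) ha he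
  calc ∑' t, causalConv a e t ^ 2 ≤ ∑' t : ℤ, (∑' j, a j) * ∑' j : ℕ, a j * e (t - j) ^ 2 :=
        (summable_sq_causalConv ha0 he0 ha he).tsum_le_tsum (sq_causalConv_le ha0 he0 ha he)
          (hfib.summable.mul_left _)
    _ = (∑' j, a j) ^ 2 * ∑' s, e s ^ 2 := by rw [tsum_mul_left, hfib.tsum_eq]; ring

end CausalConvolution

lemma tsum_pow_mulVec_sub_succ {m : Type*} [Fintype m] [DecidableEq m] (A : Matrix m m ℝ)
    (u : ℤ → m → ℝ) (t : ℤ) (hu : Summable fun j : ℕ => (A ^ j) *ᵥ u (t - 1 - j)) :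
    ∑' j : ℕ, (A ^ j) *ᵥ u (t + 1 - 1 - j) = A *ᵥ ∑' j : ℕ, (A ^ j) *ᵥ u (t - 1 - j) + u t := by
  have hshift : ∀ j : ℕ,
      (A ^ (j + 1)) *ᵥ u (t + 1 - 1 - ↑(j + 1)) = A *ᵥ ((A ^ j) *ᵥ u (t - 1 - j)) := by
    intro j
    rw [pow_succ', ← mulVec_mulVec, show t + 1 - 1 - ↑(j + 1) = t - 1 - j by push_cast; ring]
  let L : (m → ℝ) →L[ℝ] m → ℝ := (Matrix.mulVecLin A).toContinuousLinearMap
  have hL : ∀ v, L v = A *ᵥ v := fun v => by simp [L]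
  have htail : Summable fun j : ℕ => (A ^ (j + 1)) *ᵥ u (t + 1 - 1 - ↑(j + 1)) := by
    simpa only [hshift, hL] using hu.mapL L
  have hsum : Summable fun j : ℕ => (A ^ j) *ᵥ u (t + 1 - 1 - j) :=
    (summable_nat_add_iff (f := fun j : ℕ => (A ^ j) *ᵥ u (t + 1 - 1 - j)) 1).mp htail
  rw [hsum.tsum_eq_zero_add, ← hL, L.map_tsum hu, add_comm]
  simp only [hshift, hL]
  simp

lemma sq_eNorm {p : ℕ} (x : Fin p → ℝ) : eNorm x ^ 2 = x ⬝ᵥ x :=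
  Real.sq_sqrt (Finset.sum_nonneg fun i _ => mul_self_nonneg (x i))

lemma eNorm_eq_norm_equiv_symm {p : ℕ} (x : Fin p → ℝ) :
    eNorm x = ‖(EuclideanSpace.equiv (Fin p) ℝ).symm x‖ := by
  simp [eNorm, EuclideanSpace.norm_eq, dotProduct, sq]

lemma eNorm_eq_norm_toLp_ofReal {p : ℕ} (x : Fin p → ℝ) :
    eNorm x = ‖WithLp.toLp 2 (fun i => (x i : ℂ))‖ := by
  simp [eNorm, EuclideanSpace.norm_eq, dotProduct, sq]

open scoped Matrix.Norms.L2Operator in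
lemma eNorm_mulVec_le {p q : ℕ} (N : Matrix (Fin p) (Fin q) ℝ) (v : Fin q → ℝ) :
    eNorm (N *ᵥ v) ≤ ‖N.map Complex.ofReal‖ * eNorm v := by
  rw [eNorm_eq_norm_toLp_ofReal, eNorm_eq_norm_toLp_ofReal]
  convert l2_opNorm_mulVec (N.map Complex.ofReal) (WithLp.toLp 2 fun i => (v i : ℂ)) using 2
  ext i
  simp [Matrix.mulVec, dotProduct]

lemma summable_of_summable_eNorm {p : ℕ} {ι : Type*} {f : ι → Fin p → ℝ}
    (hf : Summable fun i => eNorm (f i)) : Summable f :=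
  (EuclideanSpace.equiv (Fin p) ℝ).symm.summable.mp
    (Summable.of_norm (by simpa only [eNorm_eq_norm_equiv_symm] using hf))

lemma eNorm_tsum_le {p : ℕ} {ι : Type*} {f : ι → Fin p → ℝ}
    (hf : Summable fun i => eNorm (f i)) : eNorm (∑' i, f i) ≤ ∑' i, eNorm (f i) := by
  simp only [eNorm_eq_norm_equiv_symm] at hf ⊢
  rw [ContinuousLinearEquiv.map_tsum]
  exact norm_tsum_le_tsum_norm hf

lemma dotProduct_self_le_sq_of_eNorm_le {p : ℕ} {x : Fin p → ℝ} {w : ℝ} (h : eNorm x ≤ w) :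
    x ⬝ᵥ x ≤ w ^ 2 :=
  sq_eNorm x ▸ pow_le_pow_left₀ (Real.sqrt_nonneg _) h 2

lemma memL2_of_eNorm_le {p : ℕ} {x : ℤ → Fin p → ℝ} {w : ℤ → ℝ}
    (hw : Summable fun t => w t ^ 2) (hxw : ∀ t, eNorm (x t) ≤ w t) : MemL2 x :=
  hw.of_nonneg_of_le (fun t => Finset.sum_nonneg fun i _ => mul_self_nonneg (x t i))
    fun t => dotProduct_self_le_sq_of_eNorm_le (hxw t)

lemma l2Norm_le_of_eNorm_le {p : ℕ} {x : ℤ → Fin p → ℝ} {w : ℤ → ℝ}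
    (hw : Summable fun t => w t ^ 2) (hxw : ∀ t, eNorm (x t) ≤ w t) :
    l2Norm x ≤ √(∑' t, w t ^ 2) :=
  Real.sqrt_le_sqrt <| (memL2_of_eNorm_le hw hxw).tsum_le_tsum
    (fun t => dotProduct_self_le_sq_of_eNorm_le (hxw t)) hw

open scoped Matrix.Norms.L2Operator in
lemma exists_summable_bound_pow_mulVec_mulVec {n k : ℕ} (A : Matrix (Fin n) (Fin n) ℝ)
    (hA : spectralRadius ℂ (A.map Complex.ofReal) < 1) (B : Matrix (Fin n) (Fin k) ℝ) :
    ∃ a : ℕ → ℝ, (∀ j, 0 ≤ a j) ∧ Summable a ∧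
      ∀ (j : ℕ) (v : Fin k → ℝ), eNorm ((A ^ j) *ᵥ (B *ᵥ v)) ≤ a j * eNorm v := by
  refine ⟨fun j => ‖(A.map Complex.ofReal) ^ j‖ * ‖B.map Complex.ofReal‖, fun j => by positivity,
    (summable_norm_pow_of_spectralRadius_lt_one hA).mul_right _, fun j v => ?_⟩
  rw [mulVec_mulVec]
  refine (eNorm_mulVec_le _ v).trans (mul_le_mul_of_nonneg_right ?_ (Real.sqrt_nonneg _))
  change ‖(A ^ j * B).map Complex.ofRealHom‖ ≤
    ‖(A.map Complex.ofRealHom) ^ j‖ * ‖B.map Complex.ofRealHom‖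
  rw [Matrix.map_mul, ← RingHom.mapMatrix_apply, map_pow]
  exact l2_opNorm_mul _ _

/-- If `A` has spectral radius `< 1` and `d ∈ ℓ2`, the series
`x_t = ∑_{j=0}^∞ A^j B d_{t-1-j}` converges absolutely, `x` is in ℓ2, satisfies
`x_{t+1} = A x_t + B d_t`, and there is a constant `γ ≥ 0` independent of `d`
with `‖x‖₂ ≤ γ ‖d‖₂`. -/
theorem stable_convolution_solution {n k : ℕ}
    (A : Matrix (Fin n) (Fin n) ℝ)
    (hA : spectralRadius ℂ (A.map Complex.ofReal) < 1)
    (B : Matrix (Fin n) (Fin k) ℝ) :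
    ∃ γ : ℝ, 0 ≤ γ ∧ ∀ d : ℤ → Fin k → ℝ, MemL2 d →
      (∀ t : ℤ, Summable fun j : ℕ =>
          eNorm ((A ^ j).mulVec (B.mulVec (d (t - 1 - j))))) ∧
      MemL2 (fun t : ℤ => ∑' j : ℕ, (A ^ j).mulVec (B.mulVec (d (t - 1 - j)))) ∧
      (∀ t : ℤ,
        (∑' j : ℕ, (A ^ j).mulVec (B.mulVec (d (t + 1 - 1 - j)))) =
          A.mulVec (∑' j : ℕ, (A ^ j).mulVec (B.mulVec (d (t - 1 - j)))) +
            B.mulVec (d t)) ∧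
      l2Norm (fun t : ℤ => ∑' j : ℕ, (A ^ j).mulVec (B.mulVec (d (t - 1 - j)))) ≤
        γ * l2Norm d := by
  obtain ⟨a, ha0, ha, hbound⟩ := exists_summable_bound_pow_mulVec_mulVec A hA B
  refine ⟨∑' j, a j, tsum_nonneg ha0, fun d hd => ?_⟩
  set e : ℤ → ℝ := fun s => eNorm (d s)
  have he0 : ∀ s, 0 ≤ e s := fun s => Real.sqrt_nonneg _
  have he : Summable fun s => e s ^ 2 := by simpa only [e, sq_eNorm, MemL2] using hd
  have hterm : ∀ t : ℤ, Summable fun j : ℕ => eNorm ((A ^ j) *ᵥ (B *ᵥ d (t - 1 - j))) :=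
    fun t => (summable_mul_sub ha0 ha he (t - 1)).of_nonneg_of_le (fun j => Real.sqrt_nonneg _)
      fun j => hbound j _
  have hx : ∀ t : ℤ,
      eNorm (∑' j : ℕ, (A ^ j) *ᵥ (B *ᵥ d (t - 1 - j))) ≤ causalConv a e (t - 1) :=
    fun t => (eNorm_tsum_le (hterm t)).trans <|
      (hterm t).tsum_le_tsum (fun j => hbound j _) (summable_mul_sub ha0 ha he (t - 1))
  have hw : Summable fun t : ℤ => causalConv a e (t - 1) ^ 2 :=
    (Equiv.subRight (1 : ℤ)).summable_iff (f := fun t => causalConv a e t ^ 2) |>.mpr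
      (summable_sq_causalConv ha0 he0 ha he)
  refine ⟨hterm, memL2_of_eNorm_le hw hx, fun t => tsum_pow_mulVec_sub_succ A (fun s => B *ᵥ d s) t
    (summable_of_summable_eNorm (hterm t)), ?_⟩
  calc _ ≤ √(∑' t : ℤ, causalConv a e (t - 1) ^ 2) := l2Norm_le_of_eNorm_le hw hx
    _ = √(∑' t : ℤ, causalConv a e t ^ 2) :=
        congrArg _ ((Equiv.subRight (1 : ℤ)).tsum_eq fun t => causalConv a e t ^ 2)
    _ ≤ √((∑' j, a j) ^ 2 * ∑' s, e s ^ 2) :=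
        Real.sqrt_le_sqrt (tsum_sq_causalConv_le ha0 he0 ha he)
    _ = (∑' j, a j) * l2Norm d := by
        rw [Real.sqrt_mul' _ (tsum_nonneg fun s => sq_nonneg _), Real.sqrt_sq (tsum_nonneg ha0)]
        simp only [e, sq_eNorm, l2Norm]
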